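/- For all ordinals γ < κ and η < γ, the set D³_{η,γ} = {p ∈ ℙ : γ ∈ U_p and η ∈ range(f^p_γ)} is an open dense subset of ℙ (dense: for every p ∈ ℙ there is q ∈ D³_{η,γ} with q ≤ p; open: if p ∈ D³_{η,γ} and q ≤ p then q ∈ D³_{η,γ}). -/

import Mathlib

namespace JinShelah563

open Cardinal Set

/-- We work with ordinals in the lowest universe. -/
abbrev ONat := Ordinal.{0}

/-- A node of the big tree `ω₁^{<ω₁}` is coded by the graph of a function from an
initial segment of the ordinals into the ordinals. -/
abbrev Node := Set (ONat × ONat)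

/-- The first uncountable ordinal. -/
noncomputable def ω1 : ONat := (Cardinal.aleph 1).ord

/-- The restriction (initial segment) of a node to level `β`. -/
def nodeRestrict (x : Node) (β : ONat) : Node := {z ∈ x | z.1 < β}

/-- `x` is the graph of a function from a countable ordinal `β` into `ω₁`. -/
def IsNode (x : Node) : Prop :=
  (∀ z ∈ x, z.2 < ω1) ∧
  (∀ z ∈ x, ∀ w ∈ x, z.1 = w.1 → z.2 = w.2) ∧
  ∃ β, β < ω1 ∧ Prod.fst '' x = Set.Iio β

/-- The height (= domain) of a node. -/
noncomputable def nodeHt (x : Node) : ONat := sInf {β | Prod.fst '' x = Set.Iio β}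

/-- A subtree of `ω₁^{<ω₁}`: a set of nodes closed under initial segments (the tree
order is extension, i.e. `⊆` of graphs). -/
def IsTree (t : Set Node) : Prop :=
  (∀ x ∈ t, IsNode x) ∧ ∀ x ∈ t, ∀ β : ONat, nodeRestrict x β ∈ t

/-- The `α`-th level of a tree. -/
def level (t : Set Node) (α : ONat) : Set Node := {x ∈ t | nodeHt x = α}

/-- The height of a tree: the least `α` whose level is empty. -/
noncomputable def treeHt (t : Set Node) : ONat := sInf {α | level t α = ∅}

/-- `t↾α`, the set of nodes of `t` of height `< α`. -/
def restrictTree (t : Set Node) (α : ONat) : Set Node := {x ∈ t | nodeHt x < α}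

/-- `t ≤_end t'` : `t'` end-extends `t`, i.e. `t'↾ht(t) = t`. -/
def EndExtends (t t' : Set Node) : Prop := restrictTree t' (treeHt t) = t

/-- A normal tree: (i) every node extends to every higher nonempty level;
(ii) every node of a non-top level has two distinct extensions at a common level. -/
def IsNormalTree (t : Set Node) : Prop :=
  (∀ α β : ONat, α < β → β < treeHt t → ∀ x ∈ level t α, ∃ y ∈ level t β, x ⊆ y) ∧
  (∀ α : ONat, α + 1 < treeHt t → ∀ x ∈ level t α,
    ∃ β, β < treeHt t ∧ ∃ y₁ ∈ level t β, ∃ y₂ ∈ level t β, y₁ ≠ y₂ ∧ x ⊂ y₁ ∧ x ⊂ y₂)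

/-- `𝒯`: the countable normal trees. -/
def CNTree (t : Set Node) : Prop := IsTree t ∧ t.Countable ∧ IsNormalTree t

/-- `g` is the graph of a function with domain `dom`. -/
def IsFunGraph {A B : Type*} (g : Set (A × B)) (dom : Set A) : Prop :=
  (∀ z ∈ g, z.1 ∈ dom) ∧ ∀ a ∈ dom, ∃! y, (a, y) ∈ g

/-- The raw data of a condition `p = ⟨α_p, t_p, k_p, U_p, B_p, F_p⟩` of the forcing `ℙ`.
`B_p = {b γ : γ ∈ U}` (with `β γ = β^p_γ`) and `F_p = {f γ : γ ∈ U}` (with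
`δ γ = δ^p_γ`); `b γ` and `f γ` are coded as graphs of functions. -/
structure Cond where
  α : ONat
  t : Set Node
  k : Node → Set Node
  U : Set ONat
  b : ONat → Set (Node × Node)
  β : ONat → ONat
  f : ONat → Set (ONat × ONat)
  δ : ONat → ONat

/-- Membership in the forcing notion `ℙ` (relative to the inaccessible `κ`):
clauses (a)–(g) of the definition. -/
def IsCond (κ : Cardinal.{0}) (p : Cond) : Prop :=
  -- (a)
  p.α < ω1 ∧
  -- (b)
  CNTree p.t ∧ treeHt p.t = p.α + 1 ∧
  -- (c)
  (∀ x ∈ p.t, CNTree (p.k x) ∧ treeHt (p.k x) = nodeHt x + 1) ∧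
  (∀ x ∈ p.t, ∀ y ∈ p.t, x ⊂ y → EndExtends (p.k x) (p.k y)) ∧
  -- (d)
  (∀ γ ∈ p.U, γ < κ.ord) ∧ Cardinal.mk p.U ≤ Cardinal.aleph 1 ∧
  -- (e)
  (∀ γ ∈ p.U,
    p.β γ ≤ p.α ∧
    IsFunGraph (p.b γ) (restrictTree p.t (p.β γ + 1)) ∧
    (∀ x y, (x, y) ∈ p.b γ → y ∈ level (p.k x) (nodeHt x)) ∧
    (∀ x y x' y', (x, y) ∈ p.b γ → (x', y') ∈ p.b γ → x ⊆ x' → y ⊆ y')) ∧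
  -- (f)
  (∀ γ ∈ p.U,
    p.δ γ ≤ p.α ∧
    IsFunGraph (p.f γ) (Set.Iio (p.δ γ)) ∧
    ∀ z ∈ p.f γ, z.2 < γ) ∧
  -- (g)
  (∀ x ∈ restrictTree p.t p.α, ∀ U₀ : Set ONat, U₀ ⊆ p.U → U₀.Finite →
    ∀ ε : ONat, nodeHt x < ε → ε ≤ p.α →
    ∃ x' ∈ level p.t ε, x ⊂ x' ∧
      ∀ γ₁ ∈ U₀, ∀ γ₂ ∈ U₀,
        p.β γ₁ < ε ∨ p.β γ₂ < ε ∨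
        ∀ y₁ y₂ y₁' y₂', (x, y₁) ∈ p.b γ₁ → (x, y₂) ∈ p.b γ₂ →
          (x', y₁') ∈ p.b γ₁ → (x', y₂') ∈ p.b γ₂ → y₁ = y₂ → y₁' = y₂')

/-- The order of `ℙ`: `le p q` means `p ≤ q`, i.e. `p` is a stronger condition. -/
def le (p q : Cond) : Prop :=
  -- (1)
  q.α ≤ p.α ∧ EndExtends q.t p.t ∧ (∀ x ∈ q.t, p.k x = q.k x) ∧ q.U ⊆ p.U ∧
  -- (2)
  (∀ γ ∈ q.U, q.b γ ⊆ p.b γ ∧ q.f γ ⊆ p.f γ) ∧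
  -- (3)
  {γ | γ ∈ q.U ∧ q.β γ < p.β γ}.Countable ∧
  -- (4)
  {γ | γ ∈ q.U ∧ q.δ γ < p.δ γ}.Countable

/-! ### Auxiliary lemmas -/

lemma Iio_inj' {a b : ONat} (h : Set.Iio a = Set.Iio b) : a = b := by
  by_contra hne
  rcases lt_or_gt_of_ne hne with hlt | hlt
  · have ha : a ∈ Set.Iio b := Set.mem_Iio.2 hlt
    rw [← h] at ha
    exact absurd (Set.mem_Iio.1 ha) (lt_irrefl a)
  · have hb : b ∈ Set.Iio a := Set.mem_Iio.2 hlt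
    rw [h] at hb
    exact absurd (Set.mem_Iio.1 hb) (lt_irrefl b)

lemma nodeHt_eq_of_image {x : Node} {β : ONat} (h : Prod.fst '' x = Set.Iio β) :
    nodeHt x = β := by
  have hset : {β' | Prod.fst '' x = Set.Iio β'} = {β} := by
    ext β'
    simp only [Set.mem_setOf_eq, Set.mem_singleton_iff]
    constructor
    · intro h'; exact (Iio_inj' (h.symm.trans h')).symm
    · rintro rfl; exact h
  rw [nodeHt, hset, csInf_singleton]

lemma nodeHt_spec {x : Node} (h : IsNode x) : Prod.fst '' x = Set.Iio (nodeHt x) := by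
  obtain ⟨-, -, β, -, himg⟩ := h
  rw [nodeHt_eq_of_image himg]; exact himg

lemma nodeHt_lt_omega1 {x : Node} (h : IsNode x) : nodeHt x < ω1 := by
  obtain ⟨-, -, β, hβ, himg⟩ := h
  rw [nodeHt_eq_of_image himg]; exact hβ

lemma isNode_empty : IsNode (∅ : Node) := by
  refine ⟨by simp, by simp, 0, ?_, ?_⟩
  · rw [ω1]
    exact (Cardinal.isSuccLimit_ord (Cardinal.aleph0_le_aleph 1)).bot_lt
  · rw [Set.image_empty]
    exact (Set.eq_empty_iff_forall_notMem.2 (by simp [not_lt_zero])).symm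

lemma nodeHt_empty : nodeHt (∅ : Node) = 0 := by
  apply nodeHt_eq_of_image
  rw [Set.image_empty]
  exact (Set.eq_empty_iff_forall_notMem.2 (by simp [not_lt_zero])).symm

lemma eq_empty_of_nodeHt_zero {x : Node} (hx : IsNode x) (h : nodeHt x = 0) : x = ∅ := by
  have := nodeHt_spec hx
  rw [h] at this
  have : Prod.fst '' x = ∅ := by
    rw [this]; simp [Set.eq_empty_iff_forall_notMem, not_lt_zero]
  ext z
  simp only [Set.mem_empty_iff_false, iff_false]
  intro hz
  exact absurd (Set.mem_image_of_mem Prod.fst hz) (this ▸ Set.notMem_empty _)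

lemma fst_lt_nodeHt {x : Node} (hx : IsNode x) {z : ONat × ONat} (hz : z ∈ x) :
    z.1 < nodeHt x := by
  have := nodeHt_spec hx
  have : z.1 ∈ Set.Iio (nodeHt x) := this ▸ Set.mem_image_of_mem Prod.fst hz
  exact this

lemma node_eq_of_subset {x y : Node} (hy : IsNode y) (hxy : x ⊆ y)
    (h : nodeHt y ≤ nodeHt x) (hx : IsNode x) : x = y := by
  refine Set.Subset.antisymm hxy fun z hz => ?_
  have hz1 : z.1 < nodeHt y := fst_lt_nodeHt hy hz
  have : z.1 ∈ Prod.fst '' x := by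
    rw [nodeHt_spec hx]; exact lt_of_lt_of_le hz1 h
  obtain ⟨w, hw, hw1⟩ := this
  have : w.2 = z.2 := hy.2.1 w (hxy hw) z hz hw1
  have hwz : w = z := Prod.ext hw1 this
  exact hwz ▸ hw

lemma nodeRestrict_eq_self {x : Node} (hx : IsNode x) {β : ONat} (h : nodeHt x ≤ β) :
    nodeRestrict x β = x := by
  ext z
  simp only [nodeRestrict, Set.mem_setOf_eq, Set.mem_sep_iff]
  exact ⟨fun h => h.1, fun hz => ⟨hz, lt_of_lt_of_le (fst_lt_nodeHt hx hz) h⟩⟩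

lemma isNode_nodeRestrict {x : Node} (hx : IsNode x) {β : ONat} (h : β ≤ nodeHt x) :
    IsNode (nodeRestrict x β) ∧ nodeHt (nodeRestrict x β) = β := by
  have himg : Prod.fst '' nodeRestrict x β = Set.Iio β := by
    ext a
    simp only [nodeRestrict, Set.mem_image, Set.mem_setOf_eq, Set.mem_Iio]
    constructor
    · rintro ⟨z, ⟨hz, hz1⟩, rfl⟩; exact hz1
    · intro ha
      have : a ∈ Prod.fst '' x := by rw [nodeHt_spec hx]; exact lt_of_lt_of_le ha h
      obtain ⟨z, hz, rfl⟩ := this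
      exact ⟨z, ⟨hz, ha⟩, rfl⟩
  refine ⟨⟨fun z hz => hx.1 z hz.1, fun z hz w hw => hx.2.1 z hz.1 w hw.1, β,
    lt_of_le_of_lt h (nodeHt_lt_omega1 hx), himg⟩, nodeHt_eq_of_image himg⟩

/-! ### Tree lemmas -/

lemma treeHt_eq {t : Set Node} {c : ONat} (h1 : level t c = ∅)
    (h2 : ∀ b < c, level t b ≠ ∅) : treeHt t = c := by
  refine le_antisymm (csInf_le' h1) (le_csInf ⟨c, h1⟩ fun b hb => ?_)
  by_contra hlt
  exact h2 b (lt_of_not_ge hlt) hb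

lemma level_treeHt_empty {t : Set Node} (h : treeHt t ≠ 0) : level t (treeHt t) = ∅ := by
  have hne : {α | level t α = ∅}.Nonempty := by
    by_contra hemp
    rw [Set.not_nonempty_iff_eq_empty] at hemp
    rw [treeHt, hemp] at h
    exact h Ordinal.sInf_empty
  exact csInf_mem hne

lemma level_ne_empty_of_lt {t : Set Node} {c : ONat} (h : c < treeHt t) :
    level t c ≠ ∅ := by
  intro hc
  have : treeHt t ≤ c := csInf_le' (show c ∈ {α | level t α = ∅} from hc)
  exact absurd this (not_le_of_gt h)

lemma nodeHt_lt_treeHt {t : Set Node} (htr : IsTree t) (h : treeHt t ≠ 0)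
    {x : Node} (hx : x ∈ t) : nodeHt x < treeHt t := by
  by_contra hle
  push_neg at hle
  have hx' : IsNode x := htr.1 x hx
  have hy := isNode_nodeRestrict hx' hle
  have : nodeRestrict x (treeHt t) ∈ level t (treeHt t) :=
    ⟨htr.2 x hx (treeHt t), hy.2⟩
  rw [level_treeHt_empty h] at this
  exact this

lemma restrictTree_treeHt {t : Set Node} (htr : IsTree t) (h : treeHt t ≠ 0) :
    restrictTree t (treeHt t) = t := by
  ext x
  exact ⟨fun hx => hx.1, fun hx => ⟨hx, nodeHt_lt_treeHt htr h hx⟩⟩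

lemma restrictTree_restrictTree {t : Set Node} {c d : ONat} (h : c ≤ d) :
    restrictTree (restrictTree t d) c = restrictTree t c := by
  ext x
  simp only [restrictTree, Set.mem_setOf_eq, Set.mem_sep_iff]
  exact ⟨fun hx => ⟨hx.1.1, hx.2⟩, fun hx => ⟨⟨hx.1, lt_of_lt_of_le hx.2 h⟩, hx.2⟩⟩

lemma mem_level_zero {t : Set Node} (htr : IsTree t) {x : Node} (hx : x ∈ level t 0) :
    x = ∅ := eq_empty_of_nodeHt_zero (htr.1 x hx.1) hx.2

lemma empty_mem {t : Set Node} (htr : IsTree t) (h : treeHt t ≠ 0) : ∅ ∈ t := by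
  have h0 : (0:ONat) < treeHt t := pos_iff_ne_zero.2 h
  obtain ⟨x, hx⟩ := Set.nonempty_iff_ne_empty.2 (level_ne_empty_of_lt h0)
  have := mem_level_zero htr hx
  exact this ▸ hx.1

lemma one_lt_omega1 : (1 : ONat) < ω1 := by
  have := Cardinal.isSuccLimit_ord (Cardinal.aleph0_le_aleph 1)
  have h0 : (0:ONat) < ω1 := this.bot_lt
  have := this.succ_lt h0
  rw [← Ordinal.add_one_eq_succ, zero_add] at this
  exact this

/-! ### Ordinal helpers -/

lemma onat_lt_add_one (a : ONat) : a < a + 1 := by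
  rw [Ordinal.add_one_eq_succ]; exact Order.lt_succ a

lemma onat_lt_add_one_iff {a b : ONat} : a < b + 1 ↔ a ≤ b := by
  rw [Ordinal.add_one_eq_succ]; exact Order.lt_succ_iff

lemma onat_add_one_ne_zero (a : ONat) : a + 1 ≠ 0 := by
  rw [Ordinal.add_one_eq_succ]; exact Ordinal.succ_ne_zero a

lemma add_one_lt_omega1 {a : ONat} (h : a < ω1) : a + 1 < ω1 := by
  rw [Ordinal.add_one_eq_succ]
  exact (Cardinal.isSuccLimit_ord (Cardinal.aleph0_le_aleph 1)).succ_lt h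

lemma zero_lt_omega1 : (0 : ONat) < ω1 :=
  (Cardinal.isSuccLimit_ord (Cardinal.aleph0_le_aleph 1)).bot_lt

/-! ### The one-level extension of a tree -/

/-- Extend a tree of height `a+1` by giving each top node two successors. -/
def extTree (s : Set Node) (a : ONat) : Set Node :=
  s ∪ (fun z => insert (a, (0 : ONat)) z) '' level s a
    ∪ (fun z => insert (a, (1 : ONat)) z) '' level s a

lemma mem_extTree {s : Set Node} {a : ONat} {x : Node} :
    x ∈ extTree s a ↔ x ∈ s ∨
      ∃ z ∈ level s a, x = insert (a, (0:ONat)) z ∨ x = insert (a, (1:ONat)) z := by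
  constructor
  · rintro ((h | ⟨z, hz, rfl⟩) | ⟨z, hz, rfl⟩)
    · exact Or.inl h
    · exact Or.inr ⟨z, hz, Or.inl rfl⟩
    · exact Or.inr ⟨z, hz, Or.inr rfl⟩
  · rintro (h | ⟨z, hz, rfl | rfl⟩)
    · exact Or.inl (Or.inl h)
    · exact Or.inl (Or.inr ⟨z, hz, rfl⟩)
    · exact Or.inr ⟨z, hz, rfl⟩

lemma isNode_insert {x : Node} (hx : IsNode x) {a j : ONat} (ha : nodeHt x = a)
    (hj : j < ω1) :
    IsNode (insert (a, j) x) ∧ nodeHt (insert (a, j) x) = a + 1 := by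
  have haw : a < ω1 := ha ▸ nodeHt_lt_omega1 hx
  have himg : Prod.fst '' insert (a, j) x = Set.Iio (a + 1) := by
    rw [Set.image_insert_eq, nodeHt_spec hx, ha]
    rw [Set.Iio_insert, Ordinal.add_one_eq_succ, Order.Iio_succ]
  refine ⟨⟨?_, ?_, a + 1, add_one_lt_omega1 haw, himg⟩, nodeHt_eq_of_image himg⟩
  · rintro z (rfl | hz)
    · exact hj
    · exact hx.1 z hz
  · rintro z (rfl | hz) w (rfl | hw) h
    · rfl
    · have hlt : w.1 < a := ha ▸ fst_lt_nodeHt hx hw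
      exact absurd hlt (by rw [← h]; exact lt_irrefl a)
    · have hlt : z.1 < a := ha ▸ fst_lt_nodeHt hx hz
      rw [h] at hlt
      exact absurd hlt (lt_irrefl a)
    · exact hx.2.1 z hz w hw h

lemma exists_top_ext {s : Set Node} (hs : CNTree s) {a : ONat} (hh : treeHt s = a + 1)
    {x : Node} (hx : x ∈ s) : ∃ y ∈ level s a, x ⊆ y := by
  have hht : nodeHt x < a + 1 := hh ▸ nodeHt_lt_treeHt hs.1 (hh ▸ onat_add_one_ne_zero a) hx
  rcases eq_or_lt_of_le (onat_lt_add_one_iff.1 hht) with heq | hlt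
  · exact ⟨x, ⟨hx, heq⟩, Set.Subset.rfl⟩
  · exact hs.2.2.1 (nodeHt x) a hlt (hh ▸ onat_lt_add_one a) x ⟨hx, rfl⟩

lemma j01_lt_omega1 {j : ONat} (hj : j = 0 ∨ j = 1) : j < ω1 := by
  rcases hj with rfl | rfl
  · exact zero_lt_omega1
  · exact one_lt_omega1

lemma extTree_cases {s : Set Node} {a : ONat} (hs : CNTree s) (hh : treeHt s = a + 1)
    {x : Node} (hx : x ∈ extTree s a) :
    (x ∈ s ∧ nodeHt x < a + 1) ∨
    (nodeHt x = a + 1 ∧ IsNode x ∧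
      ∃ z ∈ level s a, ∃ j : ONat, (j = 0 ∨ j = 1) ∧ x = insert (a, j) z) := by
  rcases mem_extTree.1 hx with h | ⟨z, hz, h01⟩
  · exact Or.inl ⟨h, hh ▸ nodeHt_lt_treeHt hs.1 (hh ▸ onat_add_one_ne_zero a) h⟩
  · have hznode : IsNode z := hs.1.1 z hz.1
    rcases h01 with rfl | rfl
    · obtain ⟨hn, hht⟩ := isNode_insert hznode hz.2 zero_lt_omega1
      exact Or.inr ⟨hht, hn, z, hz, 0, Or.inl rfl, rfl⟩
    · obtain ⟨hn, hht⟩ := isNode_insert hznode hz.2 one_lt_omega1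
      exact Or.inr ⟨hht, hn, z, hz, 1, Or.inr rfl, rfl⟩

lemma insert_mem_extTree {s : Set Node} {a : ONat} {z : Node} (hz : z ∈ level s a)
    {j : ONat} (hj : j = 0 ∨ j = 1) : insert (a, j) z ∈ extTree s a := by
  rcases hj with rfl | rfl
  · exact Or.inl (Or.inr ⟨z, hz, rfl⟩)
  · exact Or.inr ⟨z, hz, rfl⟩

lemma insert_mem_level_extTree {s : Set Node} {a : ONat} (hs : CNTree s)
    {z : Node} (hz : z ∈ level s a) {j : ONat} (hj : j = 0 ∨ j = 1) :
    insert (a, j) z ∈ level (extTree s a) (a + 1) :=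
  ⟨insert_mem_extTree hz hj,
    (isNode_insert (hs.1.1 z hz.1) hz.2 (j01_lt_omega1 hj)).2⟩

lemma level_extTree_of_le {s : Set Node} {a : ONat} (hs : CNTree s) (hh : treeHt s = a + 1)
    {c : ONat} (hc : c ≤ a) : level (extTree s a) c = level s c := by
  ext x
  constructor
  · rintro ⟨hx, hht⟩
    rcases extTree_cases hs hh hx with ⟨hxs, -⟩ | ⟨hxa, -⟩
    · exact ⟨hxs, hht⟩
    · rw [hht] at hxa
      exact absurd hxa (by intro h; rw [h] at hc; exact absurd hc (not_le_of_gt (onat_lt_add_one a)))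
  · rintro ⟨hx, hht⟩
    exact ⟨Or.inl (Or.inl hx), hht⟩

lemma restrictTree_extTree {s : Set Node} {a : ONat} (hs : CNTree s) (hh : treeHt s = a + 1)
    {c : ONat} (hc : c ≤ a + 1) : restrictTree (extTree s a) c = restrictTree s c := by
  ext x
  constructor
  · rintro ⟨hx, hht⟩
    rcases extTree_cases hs hh hx with ⟨hxs, -⟩ | ⟨hxa, -⟩
    · exact ⟨hxs, hht⟩
    · rw [hxa] at hht
      exact absurd (lt_of_lt_of_le hht hc) (lt_irrefl _)
  · rintro ⟨hx, hht⟩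
    exact ⟨Or.inl (Or.inl hx), hht⟩

lemma nodeRestrict_insert {z : Node} (hz : IsNode z) {a : ONat} (ha : nodeHt z = a)
    {j β : ONat} (hβ : β ≤ a) :
    nodeRestrict (insert (a, j) z) β = nodeRestrict z β := by
  ext w
  simp only [nodeRestrict, Set.mem_setOf_eq, Set.mem_insert_iff]
  constructor
  · rintro ⟨rfl | hw, hlt⟩
    · exact absurd (lt_of_lt_of_le hlt hβ) (lt_irrefl a)
    · exact ⟨hw, hlt⟩
  · rintro ⟨hw, hlt⟩
    exact ⟨Or.inr hw, hlt⟩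

lemma isTree_extTree {s : Set Node} {a : ONat} (hs : CNTree s) (hh : treeHt s = a + 1) :
    IsTree (extTree s a) := by
  constructor
  · intro x hx
    rcases extTree_cases hs hh hx with ⟨hxs, -⟩ | ⟨-, hn, -⟩
    · exact hs.1.1 x hxs
    · exact hn
  · intro x hx β
    rcases mem_extTree.1 hx with hxs | ⟨z, hz, h01⟩
    · exact Or.inl (Or.inl (hs.1.2 x hxs β))
    · have hznode : IsNode z := hs.1.1 z hz.1
      rcases le_or_gt β a with hβ | hβ
      · have : ∀ j : ONat, nodeRestrict (insert (a, j) z) β = nodeRestrict z β :=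
          fun j => nodeRestrict_insert hznode hz.2 hβ
        rcases h01 with rfl | rfl
        · rw [this 0]; exact Or.inl (Or.inl (hs.1.2 z hz.1 β))
        · rw [this 1]; exact Or.inl (Or.inl (hs.1.2 z hz.1 β))
      · have hβ' : a + 1 ≤ β := by
          rw [Ordinal.add_one_eq_succ]; exact Order.succ_le_of_lt hβ
        rcases h01 with rfl | rfl
        · rw [nodeRestrict_eq_self (isNode_insert hznode hz.2 zero_lt_omega1).1
            ((isNode_insert hznode hz.2 zero_lt_omega1).2 ▸ hβ')]
          exact hx
        · rw [nodeRestrict_eq_self (isNode_insert hznode hz.2 one_lt_omega1).1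
            ((isNode_insert hznode hz.2 one_lt_omega1).2 ▸ hβ')]
          exact hx

lemma countable_extTree {s : Set Node} {a : ONat} (hcnt : s.Countable) :
    (extTree s a).Countable := by
  have hl : (level s a).Countable := hcnt.mono fun x hx => hx.1
  exact ((hcnt.union (hl.image _)).union (hl.image _))

lemma treeHt_extTree {s : Set Node} {a : ONat} (hs : CNTree s) (hh : treeHt s = a + 1) :
    treeHt (extTree s a) = (a + 1) + 1 := by
  apply treeHt_eq
  · rw [Set.eq_empty_iff_forall_notMem]
    rintro x ⟨hx, hht⟩
    rcases extTree_cases hs hh hx with ⟨-, h⟩ | ⟨h, -⟩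
    · rw [hht] at h
      exact absurd (lt_trans (onat_lt_add_one (a+1)) h) (lt_irrefl _)
    · rw [hht] at h
      exact absurd h (ne_of_gt (onat_lt_add_one (a+1)))
  · intro b hb
    rcases le_or_gt b a with hba | hba
    · rw [level_extTree_of_le hs hh hba]
      exact level_ne_empty_of_lt (hh ▸ (lt_of_le_of_lt hba (onat_lt_add_one a)))
    · have hb1 : b = a + 1 := le_antisymm (onat_lt_add_one_iff.1 hb)
        (by rw [Ordinal.add_one_eq_succ]; exact Order.succ_le_of_lt hba)
      subst hb1
      obtain ⟨z, hz⟩ := Set.nonempty_iff_ne_empty.2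
        (level_ne_empty_of_lt (hh ▸ onat_lt_add_one a))
      exact Set.nonempty_iff_ne_empty.1 ⟨_, insert_mem_level_extTree hs hz (Or.inl rfl)⟩

lemma insert_j_ne {z : Node} (hz : IsNode z) {a : ONat} (ha : nodeHt z = a) :
    insert (a, (0:ONat)) z ≠ insert (a, (1:ONat)) z := by
  intro h
  have h0 : (a, (0:ONat)) ∈ insert (a, (1:ONat)) z := h ▸ Set.mem_insert _ _
  rcases h0 with h0 | h0
  · exact zero_ne_one (congrArg Prod.snd h0)
  · have := fst_lt_nodeHt hz h0
    rw [ha] at this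
    exact absurd this (lt_irrefl a)

lemma ssubset_insert_top {x z : Node} (hx : IsNode x) (hz : IsNode z) {a j : ONat}
    (ha : nodeHt z = a) (hxa : nodeHt x ≤ a) (hxz : x ⊆ z) :
    x ⊂ insert (a, j) z := by
  refine ⟨Set.Subset.trans hxz (Set.subset_insert _ _), fun h => ?_⟩
  have h0 : (a, j) ∈ x := h (Set.mem_insert _ _)
  have := fst_lt_nodeHt hx h0
  exact absurd (lt_of_lt_of_le this hxa) (lt_irrefl a)

lemma normal_extTree {s : Set Node} {a : ONat} (hs : CNTree s) (hh : treeHt s = a + 1) :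
    IsNormalTree (extTree s a) := by
  have hht := treeHt_extTree hs hh
  constructor
  · intro α β hab hb x hx
    rw [hht] at hb
    rcases le_or_gt β a with hβ | hβ
    · rw [level_extTree_of_le hs hh hβ]
      rw [level_extTree_of_le hs hh (le_of_lt (lt_of_lt_of_le hab hβ))] at hx
      exact hs.2.2.1 α β hab (hh ▸ lt_of_le_of_lt hβ (onat_lt_add_one a)) x hx
    · have hβ1 : β = a + 1 := le_antisymm (onat_lt_add_one_iff.1 hb)
        (by rw [Ordinal.add_one_eq_succ]; exact Order.succ_le_of_lt hβ)
      subst hβ1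
      have hαa : α ≤ a := onat_lt_add_one_iff.1 hab
      rw [level_extTree_of_le hs hh hαa] at hx
      obtain ⟨y, hy, hxy⟩ := exists_top_ext hs hh hx.1
      exact ⟨insert (a, 0) y, insert_mem_level_extTree hs hy (Or.inl rfl),
        Set.Subset.trans hxy (Set.subset_insert _ _)⟩
  · intro α hα x hx
    rw [hht] at hα
    have hαa : α ≤ a := by
      have h1 : α + 1 ≤ a + 1 := onat_lt_add_one_iff.1 hα
      rw [Ordinal.add_one_eq_succ, Ordinal.add_one_eq_succ] at h1
      exact Order.succ_le_succ_iff.1 h1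
    rw [level_extTree_of_le hs hh hαa] at hx
    obtain ⟨y, hy, hxy⟩ := exists_top_ext hs hh hx.1
    have hynode : IsNode y := hs.1.1 y hy.1
    have hxnode : IsNode x := hs.1.1 x hx.1
    have hxa : nodeHt x ≤ a := hx.2 ▸ hαa
    refine ⟨a + 1, hht ▸ onat_lt_add_one (a+1),
      insert (a, 0) y, insert_mem_level_extTree hs hy (Or.inl rfl),
      insert (a, 1) y, insert_mem_level_extTree hs hy (Or.inr rfl),
      insert_j_ne hynode hy.2, ssubset_insert_top hxnode hynode hy.2 hxa hxy,
      ssubset_insert_top hxnode hynode hy.2 hxa hxy⟩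

lemma cntree_extTree {s : Set Node} {a : ONat} (hs : CNTree s) (hh : treeHt s = a + 1) :
    CNTree (extTree s a) :=
  ⟨isTree_extTree hs hh, countable_extTree hs.2.1, normal_extTree hs hh⟩

/-! ### The extension of a condition -/

attribute [local instance] Classical.propDecidable

/-- Extend a condition `p` by one level, adding `γ` to `U` and `η` to the range of `f γ`. -/
noncomputable def extCond (p : Cond) (γ η : ONat) : Cond where
  α := p.α + 1
  t := extTree p.t p.α
  k := fun x => if nodeHt x ≤ p.α then p.k x else extTree (p.k (nodeRestrict x p.α)) p.α
  U := insert γ p.U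
  b := fun γ' => if γ' ∈ p.U then p.b γ' else {((∅ : Node), (∅ : Node))}
  β := fun γ' => if γ' ∈ p.U then p.β γ' else 0
  f := fun γ' => if γ' = γ then
      insert ((if γ ∈ p.U then p.δ γ else 0), η) (if γ ∈ p.U then p.f γ else ∅)
    else p.f γ'
  δ := fun γ' => if γ' = γ then (if γ ∈ p.U then p.δ γ else 0) + 1 else p.δ γ'

variable {p : Cond} {γ η : ONat}

lemma extCond_α : (extCond p γ η).α = p.α + 1 := rfl
lemma extCond_t : (extCond p γ η).t = extTree p.t p.α := rfl
lemma extCond_U : (extCond p γ η).U = insert γ p.U := rfl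

lemma extCond_k_low {x : Node} (h : nodeHt x ≤ p.α) :
    (extCond p γ η).k x = p.k x := if_pos h

lemma extCond_k_high {x : Node} (h : ¬ nodeHt x ≤ p.α) :
    (extCond p γ η).k x = extTree (p.k (nodeRestrict x p.α)) p.α := if_neg h

lemma extCond_b_pos {γ' : ONat} (h : γ' ∈ p.U) :
    (extCond p γ η).b γ' = p.b γ' := if_pos h

lemma extCond_b_neg {γ' : ONat} (h : γ' ∉ p.U) :
    (extCond p γ η).b γ' = {((∅ : Node), (∅ : Node))} := if_neg h

lemma extCond_β_pos {γ' : ONat} (h : γ' ∈ p.U) :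
    (extCond p γ η).β γ' = p.β γ' := if_pos h

lemma extCond_β_neg {γ' : ONat} (h : γ' ∉ p.U) :
    (extCond p γ η).β γ' = 0 := if_neg h

lemma extCond_f_eq :
    (extCond p γ η).f γ =
      insert ((if γ ∈ p.U then p.δ γ else 0), η) (if γ ∈ p.U then p.f γ else ∅) :=
  if_pos rfl

lemma extCond_f_ne {γ' : ONat} (h : γ' ≠ γ) :
    (extCond p γ η).f γ' = p.f γ' := if_neg h

lemma extCond_δ_eq :
    (extCond p γ η).δ γ = (if γ ∈ p.U then p.δ γ else 0) + 1 := if_pos rfl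

lemma extCond_δ_ne {γ' : ONat} (h : γ' ≠ γ) :
    (extCond p γ η).δ γ' = p.δ γ' := if_neg h

lemma onat_add_one_le_add_one {a b : ONat} (h : a ≤ b) : a + 1 ≤ b + 1 := by
  rw [Ordinal.add_one_eq_succ, Ordinal.add_one_eq_succ]
  exact Order.succ_le_succ h

lemma nodeRestrict_insert_top {z : Node} (hz : IsNode z) {a j : ONat} (ha : nodeHt z = a) :
    nodeRestrict (insert ((a : ONat), j) z) a = z := by
  rw [nodeRestrict_insert hz ha le_rfl, nodeRestrict_eq_self hz ha.le]

lemma extCond_isCond {κ : Cardinal.{0}} (hp : IsCond κ p) (hγ : γ < κ.ord) (hη : η < γ) :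
    IsCond κ (extCond p γ η) := by
  obtain ⟨ha, hT, hH, hc1, hc2, hd1, hd2, he, hf, hg⟩ := hp
  have hne0 : treeHt p.t ≠ 0 := by rw [hH]; exact onat_add_one_ne_zero _
  have hle_α : ∀ x ∈ p.t, nodeHt x ≤ p.α := fun x hx =>
    onat_lt_add_one_iff.1 (hH ▸ nodeHt_lt_treeHt hT.1 hne0 hx)
  have hemp : (∅ : Node) ∈ p.t := empty_mem hT.1 hne0
  have hrestr : restrictTree p.t (p.α + 1) = p.t := by
    rw [← hH]; exact restrictTree_treeHt hT.1 hne0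
  have hklow : ∀ x ∈ p.t, (extCond p γ η).k x = p.k x := fun x hx =>
    extCond_k_low (hle_α x hx)
  refine ⟨?_, ?_, ?_, ?_, ?_, ?_, ?_, ?_, ?_, ?_⟩
  -- (a)
  · exact add_one_lt_omega1 ha
  -- (b) CNTree
  · exact cntree_extTree hT hH
  -- (b) height
  · rw [extCond_α, extCond_t]; exact treeHt_extTree hT hH
  -- (c) part 1
  · intro x hx
    rcases extTree_cases hT hH hx with ⟨hxs, -⟩ | ⟨hxh, -, z, hz, j, hj, rfl⟩
    · rw [hklow x hxs]; exact hc1 x hxs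
    · have hznode : IsNode z := hT.1.1 z hz.1
      have hk : (extCond p γ η).k (insert (p.α, j) z) = extTree (p.k z) p.α := by
        rw [extCond_k_high (by rw [hxh]; exact not_le_of_gt (onat_lt_add_one p.α)),
          nodeRestrict_insert_top hznode hz.2]
      have hkz := hc1 z hz.1
      have hkzH : treeHt (p.k z) = p.α + 1 := by rw [hkz.2, hz.2]
      rw [hk, hxh]
      exact ⟨cntree_extTree hkz.1 hkzH, treeHt_extTree hkz.1 hkzH⟩
  -- (c) part 2
  · intro x hx y hy hxy
    rcases extTree_cases hT hH hy with ⟨hys, -⟩ | ⟨hyh, hynode, z, hz, j, hj, rfl⟩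
    · -- y old, so x old too
      have hxs : x ∈ p.t := by
        rcases extTree_cases hT hH hx with ⟨hxs, -⟩ | ⟨hxh, hxnode, -⟩
        · exact hxs
        · exfalso
          have : p.α ∈ Prod.fst '' x := by
            rw [nodeHt_spec hxnode, hxh]; exact onat_lt_add_one p.α
          obtain ⟨v, hv, hv1⟩ := this
          have hvy : p.α < nodeHt y := hv1 ▸ fst_lt_nodeHt (hT.1.1 y hys) (hxy.1 hv)
          exact absurd (lt_of_lt_of_le hvy (hle_α y hys)) (lt_irrefl _)
      rw [hklow x hxs, hklow y hys]
      exact hc2 x hxs y hys hxy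
    · -- y new
      have hznode : IsNode z := hT.1.1 z hz.1
      have hky : (extCond p γ η).k (insert (p.α, j) z) = extTree (p.k z) p.α := by
        rw [extCond_k_high (by rw [hyh]; exact not_le_of_gt (onat_lt_add_one p.α)),
          nodeRestrict_insert_top hznode hz.2]
      have hkz := hc1 z hz.1
      have hkzH : treeHt (p.k z) = p.α + 1 := by rw [hkz.2, hz.2]
      rcases extTree_cases hT hH hx with ⟨hxs, -⟩ | ⟨hxh, hxnode, -⟩
      · -- x old
        have hxz : x ⊆ z := by
          intro w hw
          rcases hxy.1 hw with heq | hwz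
          · have := fst_lt_nodeHt (hT.1.1 x hxs) hw
            rw [heq] at this
            exact absurd (lt_of_lt_of_le this (hle_α x hxs)) (lt_irrefl _)
          · exact hwz
        rw [hklow x hxs, hky]
        show restrictTree (extTree (p.k z) p.α) (treeHt (p.k x)) = p.k x
        have hkx := hc1 x hxs
        rw [restrictTree_extTree hkz.1 hkzH
          (by rw [hkx.2]; exact onat_add_one_le_add_one (hle_α x hxs))]
        by_cases hxez : x = z
        · subst hxez
          exact restrictTree_treeHt hkx.1.1 (by rw [hkx.2]; exact onat_add_one_ne_zero _)
        · exact hc2 x hxs z hz.1 (Set.ssubset_iff_subset_ne.2 ⟨hxz, hxez⟩)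
      · -- x new: impossible
        exfalso
        have := node_eq_of_subset hynode hxy.1 (by rw [hyh, hxh]) hxnode
        exact hxy.2 this.symm.subset
  -- (d) part 1
  · intro γ' hγ'
    rcases hγ' with rfl | hmem
    · exact hγ
    · exact hd1 γ' hmem
  -- (d) part 2
  · calc Cardinal.mk (extCond p γ η).U ≤ Cardinal.mk p.U + 1 := Cardinal.mk_insert_le
      _ ≤ Cardinal.aleph 1 + Cardinal.aleph 1 :=
        add_le_add hd2 (le_trans Cardinal.one_le_aleph0 (Cardinal.aleph0_le_aleph 1))
      _ = Cardinal.aleph 1 := Cardinal.add_eq_self (Cardinal.aleph0_le_aleph 1)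
  -- (e)
  · intro γ' hγ'
    by_cases hmem : γ' ∈ p.U
    · obtain ⟨hβle, hfg, hlev, hmono⟩ := he γ' hmem
      rw [extCond_β_pos hmem, extCond_b_pos hmem, extCond_α, extCond_t]
      refine ⟨le_trans hβle (le_of_lt (onat_lt_add_one p.α)), ?_, ?_, hmono⟩
      · rw [restrictTree_extTree hT hH (onat_add_one_le_add_one hβle)]
        exact hfg
      · intro x y hxy
        have hxdom := hfg.1 (x, y) hxy
        have hxs : x ∈ p.t := hxdom.1
        rw [extCond_k_low (hle_α x hxs)]
        exact hlev x y hxy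
    · rw [extCond_β_neg hmem, extCond_b_neg hmem, extCond_α, extCond_t]
      have hdom : restrictTree (extTree p.t p.α) (0 + 1) = ({∅} : Set Node) := by
        rw [restrictTree_extTree hT hH (onat_add_one_le_add_one ((zero_le : (0:ONat) ≤ p.α)))]
        ext w
        constructor
        · rintro ⟨hw, hlt⟩
          have : nodeHt w = 0 := le_antisymm (onat_lt_add_one_iff.1 hlt) (zero_le)
          exact eq_empty_of_nodeHt_zero (hT.1.1 w hw) this
        · rintro rfl
          exact ⟨hemp, by rw [nodeHt_empty]; exact onat_lt_add_one 0⟩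
      have hklev : (∅ : Node) ∈ level (p.k ∅) 0 := by
        have hk := hc1 ∅ hemp
        have hkH : treeHt (p.k ∅) = 0 + 1 := by rw [hk.2, nodeHt_empty]
        obtain ⟨w, hw⟩ := Set.nonempty_iff_ne_empty.2
          (level_ne_empty_of_lt (c := 0) (by rw [hkH]; exact onat_lt_add_one 0))
        have := mem_level_zero hk.1.1 hw
        exact this ▸ hw
      refine ⟨le_trans ((zero_le : (0:ONat) ≤ p.α)) (le_of_lt (onat_lt_add_one p.α)), ?_, ?_, ?_⟩
      · rw [hdom]
        constructor
        · rintro z hz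
          rw [Set.mem_singleton_iff] at hz
          rw [hz]
          rfl
        · rintro a ha
          rw [Set.mem_singleton_iff] at ha
          subst ha
          exact ⟨∅, rfl, fun y' hy' => (Prod.ext_iff.1 hy').2⟩
      · rintro x y hxy
        rw [Set.mem_singleton_iff, Prod.mk.injEq] at hxy
        obtain ⟨rfl, rfl⟩ := hxy
        rw [extCond_k_low (by rw [nodeHt_empty]; exact (zero_le : (0:ONat) ≤ p.α)), nodeHt_empty]
        exact hklev
      · rintro x y x' y' hxy hxy' hsub
        rw [Set.mem_singleton_iff, Prod.mk.injEq] at hxy hxy'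
        rw [hxy.2, hxy'.2]
  -- (f)
  · intro γ' hγ'
    by_cases hq : γ' = γ
    · subst hq
      rw [extCond_δ_eq, extCond_f_eq, extCond_α]
      by_cases hmem : γ' ∈ p.U
      · obtain ⟨hδle, hfg, hlt⟩ := hf γ' hmem
        rw [if_pos hmem, if_pos hmem]
        refine ⟨onat_add_one_le_add_one hδle, ⟨?_, ?_⟩, ?_⟩
        · rintro z (rfl | hz)
          · exact Set.mem_Iio.2 (onat_lt_add_one _)
          · exact Set.mem_Iio.2 (lt_trans (Set.mem_Iio.1 (hfg.1 z hz)) (onat_lt_add_one _))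
        · intro a haa
          have haa' : a ≤ p.δ γ' := onat_lt_add_one_iff.1 (Set.mem_Iio.1 haa)
          rcases eq_or_lt_of_le haa' with heq | hlt'
          · refine ⟨η, by rw [heq]; exact Set.mem_insert _ _, ?_⟩
            rintro y' (hy' | hy')
            · exact (Prod.ext_iff.1 hy').2
            · have h1 : a < p.δ γ' := Set.mem_Iio.1 (hfg.1 (a, y') hy')
              rw [heq] at h1
              exact absurd h1 (lt_irrefl _)
          · obtain ⟨y, hy, hu⟩ := hfg.2 a (Set.mem_Iio.2 hlt')
            refine ⟨y, Set.mem_insert_of_mem _ hy, ?_⟩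
            rintro y' (hy' | hy')
            · have h1 : a = p.δ γ' := (Prod.ext_iff.1 hy').1
              rw [h1] at hlt'
              exact absurd hlt' (lt_irrefl _)
            · exact hu y' hy'
        · rintro z (rfl | hz)
          · exact hη
          · exact hlt z hz
      · rw [if_neg hmem, if_neg hmem]
        refine ⟨onat_add_one_le_add_one ((zero_le : (0:ONat) ≤ p.α)), ⟨?_, ?_⟩, ?_⟩
        · rintro z (rfl | hz)
          · exact Set.mem_Iio.2 (onat_lt_add_one _)
          · exact absurd hz (Set.notMem_empty z)
        · intro a haa
          have haa' : a ≤ 0 := onat_lt_add_one_iff.1 (Set.mem_Iio.1 haa)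
          have h0 : a = 0 := le_antisymm haa' ((zero_le : (0:ONat) ≤ a))
          subst h0
          refine ⟨η, Set.mem_insert _ _, ?_⟩
          rintro y' (hy' | hy')
          · exact (Prod.ext_iff.1 hy').2
          · exact absurd hy' (Set.notMem_empty _)
        · rintro z (rfl | hz)
          · exact hη
          · exact absurd hz (Set.notMem_empty z)
    · have hmem : γ' ∈ p.U := by
        rcases hγ' with rfl | h
        · exact absurd rfl hq
        · exact h
      obtain ⟨hδle, hfg, hlt⟩ := hf γ' hmem
      rw [extCond_δ_ne hq, extCond_f_ne hq, extCond_α]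
      exact ⟨le_trans hδle (le_of_lt (onat_lt_add_one p.α)), hfg, hlt⟩
  -- (g)
  · intro x hx U₀ hU₀sub hU₀fin ε hε1 hε2
    rw [extCond_α, extCond_t] at *
    have hxs : x ∈ p.t := by
      rw [restrictTree_extTree hT hH le_rfl, hrestr] at hx
      exact hx
    have hε0 : (0 : ONat) < ε := lt_of_le_of_lt (zero_le) hε1
    rcases le_or_gt ε p.α with hεα | hεα
    · have hx' : x ∈ restrictTree p.t p.α := ⟨hxs, lt_of_lt_of_le hε1 hεα⟩
      obtain ⟨x', hx', hxx', hprop⟩ := hg x hx' (U₀ ∩ p.U) Set.inter_subset_right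
        (hU₀fin.inter_of_left _) ε hε1 hεα
      refine ⟨x', by rw [level_extTree_of_le hT hH hεα]; exact hx', hxx', ?_⟩
      intro γ₁ h1 γ₂ h2
      by_cases m1 : γ₁ ∈ p.U
      · by_cases m2 : γ₂ ∈ p.U
        · rcases hprop γ₁ ⟨h1, m1⟩ γ₂ ⟨h2, m2⟩ with hc | hc | hc
          · left; rw [extCond_β_pos m1]; exact hc
          · right; left; rw [extCond_β_pos m2]; exact hc
          · right; right
            rw [extCond_b_pos m1, extCond_b_pos m2]
            exact hc
        · right; left; rw [extCond_β_neg m2]; exact hε0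
      · left; rw [extCond_β_neg m1]; exact hε0
    · have hεeq : ε = p.α + 1 := le_antisymm hε2
        (by rw [Ordinal.add_one_eq_succ]; exact Order.succ_le_of_lt hεα)
      subst hεeq
      obtain ⟨y, hy, hxy⟩ := exists_top_ext hT hH hxs
      refine ⟨insert (p.α, 0) y, insert_mem_level_extTree hT hy (Or.inl rfl),
        ssubset_insert_top (hT.1.1 x hxs) (hT.1.1 y hy.1) hy.2 (hle_α x hxs) hxy, ?_⟩
      intro γ₁ h1 γ₂ h2
      left
      by_cases m1 : γ₁ ∈ p.U
      · rw [extCond_β_pos m1]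
        exact lt_of_le_of_lt (he γ₁ m1).1 (onat_lt_add_one p.α)
      · rw [extCond_β_neg m1]
        exact lt_of_le_of_lt (zero_le) (onat_lt_add_one p.α)

lemma extCond_le {κ : Cardinal.{0}} (hp : IsCond κ p) : le (extCond p γ η) p := by
  obtain ⟨ha, hT, hH, hc1, hc2, hd1, hd2, he, hf, hg⟩ := hp
  have hne0 : treeHt p.t ≠ 0 := by rw [hH]; exact onat_add_one_ne_zero _
  have hle_α : ∀ x ∈ p.t, nodeHt x ≤ p.α := fun x hx =>
    onat_lt_add_one_iff.1 (hH ▸ nodeHt_lt_treeHt hT.1 hne0 hx)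
  refine ⟨le_of_lt (onat_lt_add_one p.α), ?_, ?_, ?_, ?_, ?_, ?_⟩
  · show restrictTree (extTree p.t p.α) (treeHt p.t) = p.t
    rw [hH, restrictTree_extTree hT hH le_rfl, ← hH]
    exact restrictTree_treeHt hT.1 hne0
  · intro x hx
    exact extCond_k_low (hle_α x hx)
  · exact Set.subset_insert γ p.U
  · intro γ' hγ'
    constructor
    · rw [extCond_b_pos hγ']
    · by_cases hq : γ' = γ
      · subst hq
        rw [extCond_f_eq, if_pos hγ', if_pos hγ']
        exact Set.subset_insert _ _
      · rw [extCond_f_ne hq]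
  · have hempty : {γ' | γ' ∈ p.U ∧ p.β γ' < (extCond p γ η).β γ'} = ∅ := by
      rw [Set.eq_empty_iff_forall_notMem]
      rintro γ' ⟨h1, h2⟩
      rw [extCond_β_pos h1] at h2
      exact absurd h2 (lt_irrefl _)
    rw [hempty]
    exact Set.countable_empty
  · apply Set.Countable.mono _ (Set.countable_singleton γ)
    rintro γ' ⟨h1, h2⟩
    by_cases hq : γ' = γ
    · exact hq
    · rw [extCond_δ_ne hq] at h2
      exact absurd h2 (lt_irrefl _)

lemma extCond_mem_U : γ ∈ (extCond p γ η).U := Set.mem_insert γ p.U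

lemma extCond_mem_f :
    ((if γ ∈ p.U then p.δ γ else 0), η) ∈ (extCond p γ η).f γ := by
  rw [extCond_f_eq]
  exact Set.mem_insert _ _

/-- For all `γ < κ` and `η < γ`, the set
`D³_{η,γ} = {p ∈ ℙ : γ ∈ U_p and η ∈ range f^p_γ}` is dense and open in `ℙ`. -/
theorem statement2 (κ : Cardinal.{0}) (hκ : κ.IsInaccessible) (γ η : ONat)
    (hγ : γ < κ.ord) (hη : η < γ) :
    (∀ p : Cond, IsCond κ p →
      ∃ q : Cond, (IsCond κ q ∧ γ ∈ q.U ∧ ∃ ξ : ONat, (ξ, η) ∈ q.f γ) ∧ le q p) ∧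
    (∀ p : Cond, (IsCond κ p ∧ γ ∈ p.U ∧ ∃ ξ : ONat, (ξ, η) ∈ p.f γ) →
      ∀ q : Cond, IsCond κ q → le q p →
        IsCond κ q ∧ γ ∈ q.U ∧ ∃ ξ : ONat, (ξ, η) ∈ q.f γ) := by
  constructor
  · intro p hp
    exact ⟨extCond p γ η,
      ⟨extCond_isCond hp hγ hη, extCond_mem_U, _, extCond_mem_f⟩, extCond_le hp⟩
  · rintro p ⟨hp, hγU, ξ, hξ⟩ q hq hle
    exact ⟨hq, hle.2.2.2.1 hγU, ξ, (hle.2.2.2.2.1 γ hγU).2 hξ⟩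

end JinShelah563
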